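/- arXiv:1006.3198 — 5 statements merged into one kernel-verified Lean document; each statement's English description precedes it below -/
import Mathlib

section
/- For every integer n ≥ 1, the following identity holds in the field ℚ(X) of rational functions over ℚ: Σ_{p ∈ Par(n)} (−1)^{ℓ(p)} (1/ℓ(p)) [n; p]_X = (−1)^n (1/n) [n−1]_X, where the sum is over all ordered partitions p of n. -/
/-!
Write `w(p) = (-1)^ℓ(p) / ∏ [p_i]_X`, so that the left-hand side is `[n]_X ∑_p w(p) / ℓ(p)`.
Since `w` is invariant under cyclic rotation of the blocks, averaging over the `ℓ(p)` rotations
replaces the factor `n / ℓ(p) = ∑_i p_i / ℓ(p)` by the first block `p_1`. Splitting off the first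
block and using `∑_{p ∈ Par(m)} w(p) = (-1)^m X^(m choose 2) / [m]_X` (Gauss's `q`-binomial
theorem at `t = 1`), what remains is `∑_m m (-1)^m X^(m choose 2) [n; m]_X`, the derivative at
`t = 1` of `∏_{j < n} (1 - X^j t)`.
-/

/-- `qBracketR z m = [m]_z = (z^m - 1)(z^{m-1} - 1) ⋯ (z - 1)` in `ℚ(X)`,
with `[0]_z = 1`. -/
noncomputable def qBracketR (z : RatFunc ℚ) (m : ℕ) : RatFunc ℚ :=
  ∏ k ∈ Finset.range m, (z ^ (k + 1) - 1)

open Finset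

namespace Composition

variable {n : ℕ}

def rotate (c : Composition n) (i : ℕ) : Composition n where
  blocks := c.blocks.rotate i
  blocks_pos h := c.blocks_pos (List.mem_rotate.1 h)
  blocks_sum := by rw [(c.blocks.rotate_perm i).sum_eq, c.blocks_sum]

@[simp] lemma blocks_rotate (c : Composition n) (i : ℕ) :
    (c.rotate i).blocks = c.blocks.rotate i := rfl

@[simp] lemma length_rotate (c : Composition n) (i : ℕ) : (c.rotate i).length = c.length :=
  List.length_rotate _ _

lemma rotate_rotate_of_add_eq_length (c : Composition n) {i j : ℕ} (h : i + j = c.length) :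
    (c.rotate i).rotate j = c :=
  Composition.ext <| by rw [blocks_rotate, blocks_rotate, List.rotate_rotate, h, List.rotate_length]

lemma headI_blocks_rotate (c : Composition n) (i : Fin c.length) :
    (c.rotate i).blocks.headI = c.blocksFun i := by
  rw [blocks_rotate, List.rotate_eq_drop_append_take i.2.le, List.drop_eq_getElem_cons i.2]
  rfl

lemma sum_headI_blocks_rotate (c : Composition n) :
    ∑ i ∈ range c.length, (c.rotate i).blocks.headI = n := by
  rw [sum_range]
  exact (sum_congr rfl fun i _ => c.headI_blocks_rotate i).trans c.sum_blocksFun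

/-- Double counting through the bijection `(c, i) ↦ (c.rotate i, i)` of pairs (composition, block
index). -/
theorem sum_sum_rotate {M : Type*} [AddCommMonoid M] (F : Composition n → M) :
    ∑ c : Composition n, ∑ i ∈ range c.length, F (c.rotate i) =
      ∑ c : Composition n, c.length • F c := by
  have length_smul (c : Composition n) : c.length • F c = ∑ _i ∈ range c.length, F c := by simp
  rw [sum_congr rfl fun c _ => length_smul c, sum_sigma', sum_sigma']
  refine sum_nbij' (fun x => ⟨x.1.rotate x.2, x.2⟩)
    (fun x => ⟨x.1.rotate (x.1.length - x.2), x.2⟩) ?_ ?_ ?_ ?_ fun _ _ => rfl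
  all_goals
    rintro ⟨c, i⟩ hi
    simp only [mem_sigma, mem_univ, mem_range, true_and] at hi
  · simpa using hi
  · simpa using hi
  · exact Sigma.ext (c.rotate_rotate_of_add_eq_length (by simp; omega)) HEq.rfl
  · exact Sigma.ext (c.rotate_rotate_of_add_eq_length (Nat.sub_add_cancel hi.le)) HEq.rfl

def tail (c : Composition n) : Composition (n - c.blocks.headI) where
  blocks := c.blocks.tail
  blocks_pos h := c.blocks_pos (List.mem_of_mem_tail h)
  blocks_sum := by rw [List.tail_sum, c.blocks_sum]

def consOfLT {m : ℕ} (c : Composition m) (h : m < n) : Composition n where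
  blocks := (n - m) :: c.blocks
  blocks_pos hi := by
    rcases List.mem_cons.1 hi with rfl | hi
    · omega
    · exact c.blocks_pos hi
  blocks_sum := by rw [List.sum_cons, c.blocks_sum]; omega

lemma headI_blocks_pos (c : Composition n) (hn : 0 < n) : 0 < c.blocks.headI := by
  obtain ⟨a, l, hc⟩ := List.exists_cons_of_ne_nil (c.blocks_eq_nil.not.2 hn.ne')
  exact c.blocks_pos (by simp [hc])

theorem sum_eq_sum_range_sum_cons {M : Type*} [AddCommMonoid M] (hn : 0 < n)
    (f : List ℕ → M) :
    ∑ c : Composition n, f c.blocks =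
      ∑ m ∈ range n, ∑ c : Composition m, f ((n - m) :: c.blocks) := by
  rw [sum_sigma']
  have head_cons_tail (c : Composition n) :
      (n - (n - c.blocks.headI)) :: c.tail.blocks = c.blocks := by
    obtain ⟨a, l, hc⟩ := List.exists_cons_of_ne_nil (c.blocks_eq_nil.not.2 hn.ne')
    have ha : a ≤ n := c.blocks_le (by simp [hc])
    simp only [tail, hc, List.headI_cons, List.tail_cons, Nat.sub_sub_self ha]
  refine sum_bij' (fun c _ => ⟨n - c.blocks.headI, c.tail⟩)
    (fun x hx => x.2.consOfLT (mem_range.1 (mem_sigma.1 hx).1)) ?_ ?_ ?_ ?_ ?_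
  · intro c _
    simpa using ⟨hn, c.headI_blocks_pos hn⟩
  · simp
  · intro c _
    exact Composition.ext (head_cons_tail c)
  · intro x _
    exact Composition.sigma_eq_iff_blocks_eq.2 rfl
  · intro c _
    exact congrArg f (head_cons_tail c).symm

lemma sum_composition_zero {M : Type*} [AddCommMonoid M] (f : List ℕ → M) :
    ∑ c : Composition 0, f c.blocks = f [] := by
  rw [Fintype.sum_eq_single (Composition.ones 0) fun c hc =>
    (hc (Composition.ext (by simp [c.blocks_eq_nil.2 rfl]))).elim]
  rfl

end Composition

section QAnalogues

variable {z : RatFunc ℚ}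

@[simp] lemma qBracketR_zero (z : RatFunc ℚ) : qBracketR z 0 = 1 := rfl

lemma qBracketR_succ (z : RatFunc ℚ) (m : ℕ) :
    qBracketR z (m + 1) = qBracketR z m * (z ^ (m + 1) - 1) :=
  prod_range_succ _ _

lemma qBracketR_X_ne_zero (m : ℕ) : qBracketR RatFunc.X m ≠ 0 := by
  refine prod_ne_zero_iff.2 fun k _ => ?_
  simpa [← RatFunc.algebraMap_X] using
    RatFunc.algebraMap_ne_zero (Polynomial.X_pow_sub_C_ne_zero k.succ_pos (1 : ℚ))

noncomputable def qBinomR (z : RatFunc ℚ) (n m : ℕ) : RatFunc ℚ :=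
  if m ≤ n then qBracketR z n / (qBracketR z m * qBracketR z (n - m)) else 0

lemma qBinomR_of_le {n m : ℕ} (h : m ≤ n) :
    qBinomR z n m = qBracketR z n / (qBracketR z m * qBracketR z (n - m)) := if_pos h

lemma qBinomR_of_lt {n m : ℕ} (h : n < m) : qBinomR z n m = 0 := if_neg h.not_ge

lemma qBinomR_zero_right (hz : ∀ m, qBracketR z m ≠ 0) (n : ℕ) : qBinomR z n 0 = 1 := by
  simp [qBinomR_of_le, div_self (hz n)]

lemma qBinomR_self (hz : ∀ m, qBracketR z m ≠ 0) (n : ℕ) : qBinomR z n n = 1 := by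
  simp [qBinomR_of_le, div_self (hz n)]

lemma qBinomR_succ_succ (hz : ∀ m, qBracketR z m ≠ 0) (n m : ℕ) :
    qBinomR z (n + 1) (m + 1) = z ^ (m + 1) * qBinomR z n (m + 1) + qBinomR z n m := by
  rcases lt_trichotomy m n with h | rfl | h
  · obtain ⟨r, rfl⟩ := Nat.exists_eq_add_of_lt h
    rw [qBinomR_of_le (by omega), qBinomR_of_le (by omega), qBinomR_of_le (by omega),
      show m + r + 1 + 1 - (m + 1) = r + 1 by omega, show m + r + 1 - (m + 1) = r by omega,
      show m + r + 1 - m = r + 1 by omega, qBracketR_succ z (m + r + 1), qBracketR_succ z m,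
      qBracketR_succ z r]
    have hm := hz m
    have hr := hz r
    have hmr := hz (m + r + 1)
    have hm' : z ^ (m + 1) - 1 ≠ 0 := right_ne_zero_of_mul (qBracketR_succ z m ▸ hz (m + 1))
    have hr' : z ^ (r + 1) - 1 ≠ 0 := right_ne_zero_of_mul (qBracketR_succ z r ▸ hz (r + 1))
    field_simp
    ring
  · rw [qBinomR_self hz, qBinomR_of_lt m.lt_succ_self, qBinomR_self hz]
    ring
  · rw [qBinomR_of_lt (by omega), qBinomR_of_lt (by omega), qBinomR_of_lt h]
    ring

/-- The coefficient of `t ^ m` in `∏ j < n, (1 - z ^ j * t)`. -/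
noncomputable def gaussCoeff (z : RatFunc ℚ) (n m : ℕ) : RatFunc ℚ :=
  (-1) ^ m * z ^ m.choose 2 * qBinomR z n m

lemma gaussCoeff_zero_right (hz : ∀ m, qBracketR z m ≠ 0) (n : ℕ) : gaussCoeff z n 0 = 1 := by
  simp [gaussCoeff, qBinomR_zero_right hz]

lemma gaussCoeff_of_lt {n m : ℕ} (h : n < m) : gaussCoeff z n m = 0 := by
  simp [gaussCoeff, qBinomR_of_lt h]

lemma gaussCoeff_succ_succ (hz : ∀ m, qBracketR z m ≠ 0) (n m : ℕ) :
    gaussCoeff z (n + 1) (m + 1) =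
      z ^ (m + 1) * gaussCoeff z n (m + 1) - z ^ m * gaussCoeff z n m := by
  simp only [gaussCoeff, qBinomR_succ_succ hz, Nat.choose_succ_succ', Nat.choose_one_right]
  ring

/-- Gauss's `q`-binomial theorem. -/
theorem sum_gaussCoeff_mul_pow (hz : ∀ m, qBracketR z m ≠ 0) (n : ℕ) (t : RatFunc ℚ) :
    ∑ m ∈ range (n + 1), gaussCoeff z n m * t ^ m = ∏ j ∈ range n, (1 - z ^ j * t) := by
  induction n generalizing t with
  | zero => simp [gaussCoeff_zero_right hz]
  | succ n ih =>
    set b : ℕ → RatFunc ℚ := fun m => gaussCoeff z n m * (z * t) ^ m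
    have hstep (m : ℕ) : gaussCoeff z (n + 1) (m + 1) * t ^ (m + 1) = b (m + 1) - t * b m := by
      simp only [b, gaussCoeff_succ_succ hz]
      ring
    have hb : ∑ m ∈ range (n + 1), b m = ∏ j ∈ range n, (1 - z ^ (j + 1) * t) := by
      simp only [b, ih, pow_succ, mul_assoc]
    have hb' : ∑ m ∈ range (n + 1), b (m + 1) = ∑ m ∈ range (n + 1), b m - 1 := by
      have := sum_range_succ' b (n + 1)
      rw [sum_range_succ, show b (n + 1) = 0 by simp [b, gaussCoeff_of_lt n.lt_succ_self]] at this
      simp only [b, gaussCoeff_zero_right hz] at this ⊢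
      linear_combination -this
    rw [sum_range_succ', sum_congr rfl fun m _ => hstep m, sum_sub_distrib, ← mul_sum, hb',
      hb, prod_range_succ', gaussCoeff_zero_right hz]
    ring

lemma sum_gaussCoeff_eq_zero (hz : ∀ m, qBracketR z m ≠ 0) {n : ℕ} (hn : 0 < n) :
    ∑ m ∈ range (n + 1), gaussCoeff z n m = 0 := by
  simpa [prod_eq_zero (mem_range.2 hn)] using sum_gaussCoeff_mul_pow hz n 1

lemma sum_gaussCoeff_mul_pow_self (hz : ∀ m, qBracketR z m ≠ 0) (n : ℕ) :
    ∑ m ∈ range (n + 1), gaussCoeff z n m * z ^ m = (-1) ^ n * qBracketR z n := by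
  have := pow_card_mul_prod (s := range n) (f := fun k => z ^ (k + 1) - 1) (b := -1)
  rw [card_range] at this
  rw [sum_gaussCoeff_mul_pow hz, qBracketR, this]
  exact prod_congr rfl fun j _ => by ring

/-- The derivative of Gauss's identity at `t = 1`. -/
lemma sum_mul_gaussCoeff (hz : ∀ m, qBracketR z m ≠ 0) {n : ℕ} (hn : 0 < n) :
    ∑ m ∈ range (n + 1), (m : RatFunc ℚ) * gaussCoeff z n m = (-1) ^ n * qBracketR z (n - 1) := by
  obtain ⟨k, rfl⟩ := Nat.exists_eq_add_of_lt hn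
  set b : ℕ → RatFunc ℚ := fun m => gaussCoeff z k m * z ^ m
  have hstep (m : ℕ) : ((m + 1 : ℕ) : RatFunc ℚ) * gaussCoeff z (k + 1) (m + 1) =
      ((m + 1 : ℕ) * b (m + 1) - m * b m) - b m := by
    simp only [b, gaussCoeff_succ_succ hz]
    push_cast
    ring
  rw [zero_add, sum_range_succ', sum_congr rfl fun m _ => hstep m, sum_sub_distrib,
    sum_range_sub (fun m => (m : RatFunc ℚ) * b m), sum_gaussCoeff_mul_pow_self hz]
  simp only [b, gaussCoeff_of_lt k.lt_succ_self, zero_mul, mul_zero, pow_zero, mul_one, sub_self,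
    zero_sub, add_zero, Nat.cast_zero, add_tsub_cancel_right]
  ring

lemma gaussCoeff_div_qBracketR (hz : ∀ m, qBracketR z m ≠ 0) {n m : ℕ} (h : m ≤ n) :
    gaussCoeff z n m / qBracketR z n =
      (-1) ^ m * z ^ m.choose 2 / qBracketR z m / qBracketR z (n - m) := by
  rw [gaussCoeff, qBinomR_of_le h]
  have := hz n
  have := hz m
  have := hz (n - m)
  field_simp

/-- The series `∑ (-1)^m z^(m choose 2) t^m / [m]` and `∑ t^m / [m]` are mutually inverse. -/
lemma sum_qExp_mul_eq_zero (hz : ∀ m, qBracketR z m ≠ 0) {n : ℕ} (hn : 0 < n) :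
    ∑ m ∈ range (n + 1), (-1) ^ m * z ^ m.choose 2 / qBracketR z m / qBracketR z (n - m) = 0 := by
  rw [← sum_congr rfl fun m hm => gaussCoeff_div_qBracketR hz (Nat.lt_succ_iff.1 (mem_range.1 hm)),
    ← sum_div, sum_gaussCoeff_eq_zero hz hn, zero_div]

lemma sum_mul_qExp_mul (hz : ∀ m, qBracketR z m ≠ 0) {n : ℕ} (hn : 0 < n) :
    ∑ m ∈ range (n + 1),
        (m : RatFunc ℚ) * ((-1) ^ m * z ^ m.choose 2 / qBracketR z m / qBracketR z (n - m)) =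
      (-1) ^ n * qBracketR z (n - 1) / qBracketR z n := by
  rw [← sum_congr rfl fun m hm => congrArg _ <|
      gaussCoeff_div_qBracketR hz (Nat.lt_succ_iff.1 (mem_range.1 hm))]
  simp only [← mul_div_assoc]
  rw [← sum_div, sum_mul_gaussCoeff hz hn]

noncomputable def qWeight (z : RatFunc ℚ) (l : List ℕ) : RatFunc ℚ :=
  (-1) ^ l.length / (l.map (qBracketR z)).prod

lemma qWeight_nil (z : RatFunc ℚ) : qWeight z [] = 1 := by simp [qWeight]

lemma qWeight_cons (z : RatFunc ℚ) (a : ℕ) (l : List ℕ) :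
    qWeight z (a :: l) = -qWeight z l / qBracketR z a := by
  simp only [qWeight, List.length_cons, List.map_cons, List.prod_cons, pow_succ]
  ring

lemma qWeight_rotate (z : RatFunc ℚ) (l : List ℕ) (i : ℕ) :
    qWeight z (l.rotate i) = qWeight z l := by
  rw [qWeight, qWeight, List.length_rotate, List.map_rotate, (List.rotate_perm _ _).prod_eq]

theorem sum_qWeight (hz : ∀ m, qBracketR z m ≠ 0) (n : ℕ) :
    ∑ c : Composition n, qWeight z c.blocks = (-1) ^ n * z ^ n.choose 2 / qBracketR z n := by
  induction n using Nat.strong_induction_on with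
  | _ n ih =>
    rcases n.eq_zero_or_pos with rfl | hn
    · simp [Composition.sum_composition_zero, qWeight_nil]
    have hsplit := Composition.sum_eq_sum_range_sum_cons hn (qWeight z)
    simp only [qWeight_cons, ← sum_div, sum_neg_distrib] at hsplit
    rw [hsplit, sum_congr rfl fun m hm => by rw [ih m (mem_range.1 hm)]]
    have := sum_qExp_mul_eq_zero hz hn
    rw [sum_range_succ, Nat.sub_self, qBracketR_zero, div_one] at this
    simp only [neg_div, sum_neg_distrib]
    linear_combination -this

theorem sum_headI_mul_qWeight (hz : ∀ m, qBracketR z m ≠ 0) {n : ℕ} (hn : 0 < n) :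
    ∑ c : Composition n, (c.blocks.headI : RatFunc ℚ) * qWeight z c.blocks =
      (-1) ^ n * qBracketR z (n - 1) / qBracketR z n := by
  rw [Composition.sum_eq_sum_range_sum_cons hn (fun l => (l.headI : RatFunc ℚ) * qWeight z l)]
  simp only [List.headI_cons, qWeight_cons, ← mul_sum, ← sum_div, sum_neg_distrib, sum_qWeight hz]
  set r : ℕ → RatFunc ℚ := fun m => (-1) ^ m * z ^ m.choose 2 / qBracketR z m / qBracketR z (n - m)
  have hcast (m : ℕ) (hm : m ∈ range (n + 1)) :
      ((n - m : ℕ) : RatFunc ℚ) * r m = n * r m - m * r m := by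
    rw [Nat.cast_sub (Nat.lt_succ_iff.1 (mem_range.1 hm))]
    ring
  calc _ = -∑ m ∈ range (n + 1), ((n - m : ℕ) : RatFunc ℚ) * r m := by
        simp [sum_range_succ, r, neg_div]
    _ = ∑ m ∈ range (n + 1), m * r m := by
        rw [sum_congr rfl hcast, sum_sub_distrib, ← mul_sum, sum_qExp_mul_eq_zero hz hn]
        ring
    _ = _ := sum_mul_qExp_mul hz hn

theorem sum_qWeight_div_length (hz : ∀ m, qBracketR z m ≠ 0) {n : ℕ} (hn : 0 < n) :
    ∑ c : Composition n, qWeight z c.blocks / c.length =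
      (-1) ^ n * qBracketR z (n - 1) / (n * qBracketR z n) := by
  let F : Composition n → RatFunc ℚ := fun c => c.blocks.headI * qWeight z c.blocks / c.length
  have hrot (c : Composition n) :
      ∑ i ∈ range c.length, F (c.rotate i) = n * (qWeight z c.blocks / c.length) :=
    calc ∑ i ∈ range c.length, F (c.rotate i)
        = (∑ i ∈ range c.length, ((c.rotate i).blocks.headI : RatFunc ℚ)) *
            (qWeight z c.blocks / c.length) := by
          rw [sum_mul]
          refine sum_congr rfl fun i _ => ?_
          simp only [F, Composition.length_rotate, Composition.blocks_rotate, qWeight_rotate]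
          ring
      _ = _ := by rw [← Nat.cast_sum, c.sum_headI_blocks_rotate]
  have hlen (c : Composition n) : c.length • F c = c.blocks.headI * qWeight z c.blocks := by
    have : (c.length : RatFunc ℚ) ≠ 0 := Nat.cast_ne_zero.2 (c.length_pos_of_pos hn).ne'
    simp only [F, nsmul_eq_mul]
    field_simp
  have hcount := Composition.sum_sum_rotate F
  simp only [hrot, hlen, ← mul_sum, sum_headI_mul_qWeight hz hn] at hcount
  have hn' : (n : RatFunc ℚ) ≠ 0 := Nat.cast_ne_zero.2 hn.ne'
  rw [mul_comm (n : RatFunc ℚ), ← div_div, ← hcount, mul_div_cancel_left₀ _ hn']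

end QAnalogues

/-- Lemma 2.7 of the paper: in `ℚ(X)`,
`Σ_{p ∈ Par(n)} (-1)^{ℓ(p)} (1/ℓ(p)) [n; p]_X = (-1)^n (1/n) [n-1]_X`. -/
theorem stmt_3 (n : ℕ) (hn : 1 ≤ n) :
    ∑ c : Composition n, ((-1 : RatFunc ℚ) ^ c.length * (1 / (c.length : RatFunc ℚ)) *
        (qBracketR RatFunc.X n / (c.blocks.map (fun p => qBracketR RatFunc.X p)).prod)) =
      (-1 : RatFunc ℚ) ^ n * (1 / (n : RatFunc ℚ)) * qBracketR RatFunc.X (n - 1) := by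
  have hsummand (c : Composition n) :
      (-1) ^ c.length * (1 / (c.length : RatFunc ℚ)) *
          (qBracketR RatFunc.X n / (c.blocks.map fun p => qBracketR RatFunc.X p).prod) =
        qBracketR RatFunc.X n * (qWeight RatFunc.X c.blocks / c.length) := by
    rw [qWeight]
    ring
  rw [sum_congr rfl fun c _ => hsummand c, ← mul_sum, sum_qWeight_div_length qBracketR_X_ne_zero hn]
  have := qBracketR_X_ne_zero n
  field_simp
end

section
/- Let F be a finite field, let A = F[T] be the polynomial ring over F in one variable T, and let f ∈ F[X] be a monic irreducible polynomial of degree n. If M and N are n × n matrices with entries in A such that the characteristic polynomial of M and the characteristic polynomial of N both equal the image of f under the coefficient embedding F[X] → A[X], then M and N are conjugate by a matrix in GL_n(A): there exists P ∈ GL_n(A) with N = P M P^{−1}. -/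
/-!
Let `K = F[Y]/(f)`, a field. By Cayley–Hamilton `f(M) = 0`, so `A^n` becomes a module over the
principal ideal domain `K[T]`, with `root f` acting by `M` and `T` by scalar multiplication.
Since `K[T]` is integral over `A` and `A^n` is torsion-free over `A`, this module is torsion-free
over `K[T]`, hence free; as `K[T]` has rank `deg f = n` over `A`, it is free of rank one. So
`(A^n, M)` and `(A^n, N)` are both isomorphic to `(K[T], root f · _)`, and the resulting
`A`-linear automorphism of `A^n` intertwining `M` and `N` is given by a matrix in `GL_n(A)`.
-/

open Polynomial Module
open scoped Matrix

theorem Module.IsTorsionFree.of_isIntegral {A R V : Type*} [CommRing A] [IsDomain A] [CommRing R]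
    [IsDomain R] [Algebra A R] [Algebra.IsIntegral A R] [AddCommGroup V] [Module A V] [Module R V]
    [IsScalarTower A R V] [IsTorsionFree A V] : IsTorsionFree R V := by
  refine .of_smul_eq_zero fun r v hrv => or_iff_not_imp_left.mpr fun hr => ?_
  obtain ⟨a, ha, ha0⟩ := Submodule.exists_mem_ne_zero_of_ne_bot
    (Ideal.comap_ne_bot_of_integral_mem hr (Ideal.mem_span_singleton_self r)
      (Algebra.IsIntegral.isIntegral (R := A) r))
  obtain ⟨s, hs⟩ := Ideal.mem_span_singleton'.mp ha
  have : a • v = 0 := by rw [← algebraMap_smul R, ← hs, mul_smul, hrv, smul_zero]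
  exact (smul_eq_zero.mp this).resolve_left ha0

theorem nonempty_linearEquiv_self_of_finrank_eq {A R V : Type*} [CommRing A] [IsDomain A]
    [CommRing R] [IsDomain R] [IsPrincipalIdealRing R] [Algebra A R] [Module.Free A R]
    [Module.Finite A R] [AddCommGroup V] [Module A V] [Module R V] [IsScalarTower A R V]
    [Module.Free A V] [Module.Finite A V] (h : finrank A V = finrank A R)
    (hR : finrank A R ≠ 0) : Nonempty (V ≃ₗ[R] R) := by
  have : Module.Finite R V := .of_restrictScalars_finite A R V
  have : IsTorsionFree R V := .of_isIntegral (A := A)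
  have hrank : finrank A R * finrank R V = finrank A R * finrank R R := by
    rw [finrank_mul_finrank, h, finrank_self, mul_one]
  exact FiniteDimensional.nonempty_linearEquiv_of_finrank_eq
    (Nat.eq_of_mul_eq_mul_left (Nat.pos_of_ne_zero hR) hrank)

attribute [local instance] Polynomial.algebra

noncomputable def Module.Basis.polynomial {R S ι : Type*} [CommRing R] [CommRing S] [Algebra R S]
    (b : Basis ι R S) : Basis ι R[X] S[X] :=
  (Algebra.IsPushout.out (R := R) (S := R[X]) (R' := S) (S' := S[X])).basis b

namespace AdjoinRoot

variable {F : Type*} [CommRing F] {f : F[X]} {V : Type*} [AddCommGroup V] [Module F[X] V]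
  (φ : Module.End F[X] V) (hφ : aeval φ (f.map C) = 0)

noncomputable def liftEnd : AdjoinRoot f →+* Module.End F[X] V :=
  Ideal.Quotient.lift _ (eval₂RingHom' ((algebraMap F[X] _).comp C) φ
      fun c => Algebra.commute_algebraMap_left (C c) φ) fun p hp => by
    obtain ⟨q, rfl⟩ := Ideal.mem_span_singleton.mp hp
    rw [aeval_def, eval₂_map] at hφ
    rw [map_mul, eval₂RingHom'_apply, hφ, zero_mul]

theorem liftEnd_of (c : F) : liftEnd φ hφ (of f c) = algebraMap F[X] _ (C c) :=
  eval₂_C _ _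

theorem liftEnd_root : liftEnd φ hφ (root f) = φ :=
  eval₂_X _ _

noncomputable def polynomialLift : (AdjoinRoot f)[X] →ₐ[F[X]] Module.End F[X] V :=
  have hX (k : AdjoinRoot f) : Commute (liftEnd φ hφ k) (algebraMap F[X] (Module.End F[X] V) X) :=
    Algebra.commute_algebraMap_right X _
  { eval₂RingHom' (liftEnd φ hφ) _ hX with
    commutes' := RingHom.congr_fun <| Polynomial.ringHom_ext
      (f := (eval₂RingHom' (liftEnd φ hφ) _ hX).comp (algebraMap F[X] (AdjoinRoot f)[X]))
      (fun c => by simp [liftEnd_of]) (by simp) }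

theorem polynomialLift_C_root : polynomialLift φ hφ (C (root f)) = φ :=
  (eval₂_C _ _).trans (liftEnd_root φ hφ)

end AdjoinRoot

theorem exists_linearEquiv_polynomial_adjoinRoot {F : Type*} [Field F] {f : F[X]}
    (hf : Irreducible f) {V : Type*} [AddCommGroup V] [Module F[X] V] [Module.Free F[X] V]
    [Module.Finite F[X] V] (hV : finrank F[X] V = f.natDegree) (φ : Module.End F[X] V)
    (hφ : aeval φ (f.map C) = 0) :
    ∃ e : V ≃ₗ[F[X]] (AdjoinRoot f)[X], ∀ v, e (φ v) = C (AdjoinRoot.root f) * e v := by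
  have : Fact (Irreducible f) := ⟨hf⟩
  let σ := AdjoinRoot.polynomialLift φ hφ
  let _ : Module (AdjoinRoot f)[X] V := Module.compHom V σ.toRingHom
  have : IsScalarTower F[X] (AdjoinRoot f)[X] V :=
    ⟨fun a k v => by
      change σ (a • k) v = a • σ k v
      rw [Algebra.smul_def, map_mul, σ.commutes, Module.End.mul_apply, Module.algebraMap_end_apply]⟩
  let b := (AdjoinRoot.powerBasis hf.ne_zero).basis.polynomial
  have : Module.Free F[X] (AdjoinRoot f)[X] := .of_basis b
  have : Module.Finite F[X] (AdjoinRoot f)[X] := .of_basis b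
  have hK : finrank F[X] (AdjoinRoot f)[X] = f.natDegree := by
    rw [finrank_eq_card_basis b, Fintype.card_fin, AdjoinRoot.powerBasis_dim]
  obtain ⟨e⟩ := nonempty_linearEquiv_self_of_finrank_eq (A := F[X]) (R := (AdjoinRoot f)[X])
    (V := V) (hV.trans hK.symm) (hK ▸ hf.natDegree_pos.ne')
  refine ⟨e.restrictScalars F[X], fun v => ?_⟩
  have : C (AdjoinRoot.root f) • v = φ v := congrArg (· v) (AdjoinRoot.polynomialLift_C_root φ hφ)
  simp [← this]

theorem Matrix.exists_isUnit_det_eq_mul_mul_inv_of_linearEquiv {R ι : Type*} [CommRing R]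
    [Fintype ι] [DecidableEq ι] {M N : Matrix ι ι R} (g : (ι → R) ≃ₗ[R] (ι → R))
    (hg : ∀ v, g (M *ᵥ v) = N *ᵥ g v) :
    ∃ P : Matrix ι ι R, IsUnit P.det ∧ N = P * M * P⁻¹ := by
  let P := LinearMap.toMatrix' (g : (ι → R) →ₗ[R] (ι → R))
  have hP : IsUnit P.det := by
    have := g.isUnit_det (Pi.basisFun R ι) (Pi.basisFun R ι)
    rwa [LinearMap.toMatrix_eq_toMatrix'] at this
  have hPM : P * M = N * P := by
    have : (g : (ι → R) →ₗ[R] (ι → R)) ∘ₗ M.toLin' = N.toLin' ∘ₗ g := LinearMap.ext hg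
    simpa [P, LinearMap.toMatrix'_comp] using congrArg LinearMap.toMatrix' this
  refine ⟨P, hP, ?_⟩
  rw [hPM, Matrix.mul_assoc, Matrix.mul_nonsing_inv _ hP, Matrix.mul_one]

theorem stmt_8_general (F : Type*) [Field F] (n : ℕ)
    (f : F[X]) (hirr : Irreducible f) (hdeg : f.natDegree = n)
    (M N : Matrix (Fin n) (Fin n) F[X])
    (hM : M.charpoly = f.map (Polynomial.C : F →+* F[X]))
    (hN : N.charpoly = f.map (Polynomial.C : F →+* F[X])) :
    ∃ P : Matrix (Fin n) (Fin n) F[X], IsUnit P.det ∧ N = P * M * P⁻¹ := by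
  have hV : finrank F[X] (Fin n → F[X]) = f.natDegree := by simp [hdeg]
  have cayleyHamilton (A : Matrix (Fin n) (Fin n) F[X]) (hA : A.charpoly = f.map C) :
      aeval A.toLin' (f.map C) = 0 := by
    rw [← hA, ← Matrix.charpoly_toLin']
    exact LinearMap.aeval_self_charpoly _
  obtain ⟨eM, heM⟩ := exists_linearEquiv_polynomial_adjoinRoot hirr hV _ (cayleyHamilton M hM)
  obtain ⟨eN, heN⟩ := exists_linearEquiv_polynomial_adjoinRoot hirr hV _ (cayleyHamilton N hN)
  refine Matrix.exists_isUnit_det_eq_mul_mul_inv_of_linearEquiv (eM.trans eN.symm) fun v => ?_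
  simp only [Matrix.toLin'_apply] at heM heN
  apply eN.injective
  simp [heM, heN]

/-- Over `A = F[T]` (`F` a finite field), any two `n × n` matrices whose
characteristic polynomial equals (the image in `A[X]` of) a fixed monic
irreducible polynomial `f ∈ F[X]` of degree `n` are conjugate by an element of
`GL_n(A)`. -/
theorem stmt_8 (F : Type*) [Field F] [Finite F] (n : ℕ)
    (f : F[X]) (hmonic : f.Monic) (hirr : Irreducible f) (hdeg : f.natDegree = n)
    (M N : Matrix (Fin n) (Fin n) F[X])
    (hM : M.charpoly = f.map (Polynomial.C : F →+* F[X]))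
    (hN : N.charpoly = f.map (Polynomial.C : F →+* F[X])) :
    ∃ P : Matrix (Fin n) (Fin n) F[X], IsUnit P.det ∧ N = P * M * P⁻¹ :=
  stmt_8_general F n f hirr hdeg M N hM hN
end

section
/- Let F ⊆ E be finite fields with [E : F] = m, and let f ∈ F[X] be a monic irreducible polynomial of degree d. Set g := gcd(d, m). Then the image of f in E[X] factors as a product of exactly g pairwise distinct monic irreducible polynomials of E[X], each of degree d/g. -/
open Polynomial IntermediateField

lemma pow_pow_self {M : Type*} [Monoid M] {a : M} {s : ℕ} (h : a ^ s = a) (t : ℕ) :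
    a ^ s ^ t = a := by
  induction t with
  | zero => simpa using h
  | succ t ih => rw [pow_succ, pow_mul, ih, h]

lemma key (F E : Type*) [Field F] [Field E] [Fintype F] [Fintype E] [Algebra F E]
    (m d : ℕ) (hm : Module.finrank F E = m) (f : F[X]) (hmonic : f.Monic)
    (hirr : Irreducible f) (hdeg : f.natDegree = d)
    (p : E[X]) (hp : p ∣ f.map (algebraMap F E)) (hpm : p.Monic) (hpi : Irreducible p) :
    p.natDegree = d / Nat.gcd d m := by
  classical
  set Ω := AlgebraicClosure E
  have hd0 : d ≠ 0 := by rw [← hdeg]; exact hirr.natDegree_pos.ne'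
  have hm0 : m ≠ 0 := by rw [← hm]; exact Module.finrank_pos.ne'
  set q := Fintype.card F with hq
  have hq1 : 1 < q := Fintype.one_lt_card
  have hcardE : Fintype.card E = q ^ m := by rw [← hm]; exact Module.card_eq_pow_finrank
  -- a root of p in Ω
  obtain ⟨α, hα⟩ : ∃ α : Ω, (p.map (algebraMap E Ω)).eval α = 0 := by
    have : (p.map (algebraMap E Ω)).degree ≠ 0 := by
      rw [degree_map]
      exact degree_ne_of_natDegree_ne hpi.natDegree_pos.ne'
    obtain ⟨α, hα⟩ := IsAlgClosed.exists_root _ this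
    exact ⟨α, hα⟩
  -- α is a root of f over Ω
  have hfΩ : f.map (algebraMap F Ω) = (f.map (algebraMap F E)).map (algebraMap E Ω) := by
    rw [Polynomial.map_map, ← IsScalarTower.algebraMap_eq]
  have hfα : (Polynomial.aeval α) f = 0 := by
    obtain ⟨r, hr⟩ := hp
    rw [aeval_def, ← eval_map, hfΩ, hr, Polynomial.map_mul, eval_mul, hα, zero_mul]
  have hintF : IsIntegral F α := ⟨f, hmonic, by rwa [← aeval_def]⟩
  have hpα : (Polynomial.aeval α) p = 0 := by rwa [aeval_def, ← eval_map]
  have hintE : IsIntegral E α := ⟨p, hpm, by rwa [← aeval_def]⟩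
  have hminF : minpoly F α = f := (minpoly.eq_of_irreducible_of_monic hirr hfα hmonic).symm
  have hminE : minpoly E α = p := (minpoly.eq_of_irreducible_of_monic hpi hpα hpm).symm
  set k := p.natDegree with hk
  -- finrank of E⟮α⟯ over E
  have hEα : Module.finrank E E⟮α⟯ = k := by
    rw [IntermediateField.adjoin.finrank hintE, hminE]
  haveI : FiniteDimensional E E⟮α⟯ := IntermediateField.adjoin.finiteDimensional hintE
  haveI : FiniteDimensional F F⟮α⟯ := IntermediateField.adjoin.finiteDimensional hintF
  have hFα : Module.finrank F F⟮α⟯ = d := by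
    rw [IntermediateField.adjoin.finrank hintF, hminF, hdeg]
  -- α ^ q ^ d = α
  have hαd : α ^ q ^ d = α := by
    haveI : Finite F⟮α⟯ := Module.finite_of_finite F
    haveI : Fintype F⟮α⟯ := Fintype.ofFinite _
    have hc : Fintype.card F⟮α⟯ = q ^ d := by rw [← hFα]; exact Module.card_eq_pow_finrank
    have := FiniteField.pow_card (IntermediateField.AdjoinSimple.gen F α)
    rw [hc] at this
    have := congrArg (algebraMap F⟮α⟯ Ω) this
    rwa [map_pow, IntermediateField.AdjoinSimple.algebraMap_gen] at this
  -- characteristic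
  set pc := ringChar F with hpc
  obtain ⟨a, hppr, hqa⟩ := FiniteField.card F pc
  haveI : Fact pc.Prime := ⟨hppr⟩
  haveI : CharP Ω pc := charP_of_injective_algebraMap
    (algebraMap F Ω).injective pc
  set N := q ^ Nat.lcm d m with hN
  have hN1 : 1 < N := Nat.one_lt_pow (Nat.lcm_ne_zero hd0 hm0) hq1
  -- every element of E⟮α⟯ satisfies x ^ N = x
  have hfix : ∀ x : Ω, x ∈ E⟮α⟯ → x ^ N = x := by
    have hNp : N = pc ^ ((a : ℕ) * Nat.lcm d m) := by
      rw [hN, hq, hqa, ← pow_mul]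
    intro x hx
    induction hx using IntermediateField.adjoin_induction with
    | mem x hx =>
      rcases Set.mem_singleton_iff.mp hx with rfl
      rw [hN, ← Nat.div_mul_cancel (Nat.dvd_lcm_left d m), pow_mul']
      exact pow_pow_self hαd _
    | algebraMap x =>
      have hx : x ^ q ^ m = x := by
        have := FiniteField.pow_card x
        rwa [hcardE] at this
      rw [hN, ← Nat.div_mul_cancel (Nat.dvd_lcm_right d m), pow_mul', ← map_pow, pow_pow_self hx]
    | add x y hx hy ihx ihy =>
      rw [hNp] at ihx ihy ⊢
      rw [add_pow_char_pow, ihx, ihy]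
    | inv x hx ih => rw [inv_pow, ih]
    | mul x y hx hy ihx ihy => rw [mul_pow, ihx, ihy]
  -- cardinality bound : q ^ (m * k) ≤ N
  haveI : Finite E⟮α⟯ := Module.finite_of_finite E
  haveI : Fintype E⟮α⟯ := Fintype.ofFinite _
  have hcEα : Fintype.card E⟮α⟯ = q ^ (m * k) := by
    have : Fintype.card E⟮α⟯ = Fintype.card E ^ Module.finrank E E⟮α⟯ :=
      Module.card_eq_pow_finrank
    rw [this, hEα, hcardE, ← pow_mul]
  have hle : m * k ≤ Nat.lcm d m := by
    have hpoly : (X ^ N - X : Polynomial Ω) ≠ 0 := FiniteField.X_pow_card_sub_X_ne_zero Ω hN1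
    have hdegpoly : (X ^ N - X : Polynomial Ω).natDegree = N :=
      FiniteField.X_pow_card_sub_X_natDegree_eq Ω hN1
    set T := (X ^ N - X : Polynomial Ω).roots.toFinset with hT
    have hmemT : ∀ x : E⟮α⟯, (x : Ω) ∈ T := by
      intro x
      rw [hT, Multiset.mem_toFinset, mem_roots hpoly]
      simp only [IsRoot, eval_sub, eval_pow, eval_X]
      rw [hfix x x.2, sub_self]
    have hinj : Function.Injective (fun x : E⟮α⟯ => (⟨(x : Ω), hmemT x⟩ : T)) := by
      intro x y hxy
      exact Subtype.ext (congrArg Subtype.val hxy :)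
    have := Fintype.card_le_of_injective _ hinj
    rw [hcEα, Fintype.card_coe] at this
    have hTle : T.card ≤ N := by
      calc T.card ≤ Multiset.card (X ^ N - X : Polynomial Ω).roots := (X ^ N - X : Polynomial Ω).roots.toFinset_card_le
        _ ≤ (X ^ N - X : Polynomial Ω).natDegree := card_roots' _
        _ = N := hdegpoly
    have := this.trans hTle
    exact (Nat.pow_le_pow_iff_right hq1).mp this
  -- divisibility : lcm d m ∣ m * k
  have hdvd : Nat.lcm d m ∣ m * k := by
    haveI : IsScalarTower F (↥E⟮α⟯) Ω := IsScalarTower.of_algebraMap_eq fun x => by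
      rw [IsScalarTower.algebraMap_apply F E Ω x, IsScalarTower.algebraMap_apply E (↥E⟮α⟯) Ω,
        ← IsScalarTower.algebraMap_apply F E (↥E⟮α⟯)]
    haveI : FiniteDimensional F E⟮α⟯ := FiniteDimensional.trans F E E⟮α⟯
    have hαmem : α ∈ E⟮α⟯ := IntermediateField.mem_adjoin_simple_self E α
    set x : E⟮α⟯ := ⟨α, hαmem⟩ with hx
    have hfx : (Polynomial.aeval x) f = 0 := by
      apply (algebraMap E⟮α⟯ Ω).injective
      rw [map_zero, ← aeval_algebraMap_apply]
      simpa using hfα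
    have hminFx : minpoly F x = f := (minpoly.eq_of_irreducible_of_monic hirr hfx hmonic).symm
    have hdvd1 : d ∣ Module.finrank F E⟮α⟯ := by
      have := minpoly.degree_dvd (x := x) ⟨f, hmonic, by rwa [← aeval_def]⟩
      rwa [hminFx, hdeg] at this
    have hfr : Module.finrank F E⟮α⟯ = m * k := by
      rw [← hm, ← hEα]
      exact (Module.finrank_mul_finrank F E E⟮α⟯).symm
    rw [hfr] at hdvd1
    exact Nat.lcm_dvd hdvd1 ⟨k, rfl⟩
  have heq : m * k = Nat.lcm d m :=
    Nat.le_antisymm hle (Nat.le_of_dvd (Nat.pos_of_ne_zero (mul_ne_zero hm0 hpi.natDegree_pos.ne')) hdvd)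
  -- conclude k = d / gcd d m
  have hgl : Nat.gcd d m * Nat.lcm d m = d * m := Nat.gcd_mul_lcm d m
  have : Nat.gcd d m * k = d := by
    have h1 : m * (Nat.gcd d m * k) = m * d := by
      rw [← mul_assoc, mul_comm m (Nat.gcd d m), mul_assoc, heq, hgl, mul_comm]
    exact Nat.eq_of_mul_eq_mul_left (Nat.pos_of_ne_zero hm0) h1
  exact (Nat.div_eq_of_eq_mul_left (Nat.pos_of_ne_zero (Nat.gcd_ne_zero_left hd0))
    (by nth_rewrite 1 [← this]; rw [mul_comm])).symm

/-- Let `F ⊆ E` be finite fields with `[E : F] = m`, and `f ∈ F[X]` monic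
irreducible of degree `d`.  With `g = gcd(d, m)`, the image of `f` in `E[X]`
is a product of exactly `g` pairwise distinct monic irreducible polynomials,
each of degree `d / g`. -/
theorem stmt_10 (F E : Type*) [Field F] [Field E] [Finite F] [Finite E] [Algebra F E]
    (m : ℕ) (hm : Module.finrank F E = m)
    (d : ℕ) (f : F[X]) (hmonic : f.Monic) (hirr : Irreducible f) (hdeg : f.natDegree = d) :
    ∃ s : Finset E[X], s.card = Nat.gcd d m ∧
      (∀ p ∈ s, p.Monic ∧ Irreducible p ∧ p.natDegree = d / Nat.gcd d m) ∧
      f.map (algebraMap F E) = ∏ p ∈ s, p := by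
  classical
  haveI : Fintype F := Fintype.ofFinite F
  haveI : Fintype E := Fintype.ofFinite E
  set fE := f.map (algebraMap F E) with hfE
  have hfEm : fE.Monic := hmonic.map _
  have hfE0 : fE ≠ 0 := hfEm.ne_zero
  have hd0 : d ≠ 0 := by rw [← hdeg]; exact hirr.natDegree_pos.ne'
  have hm0 : m ≠ 0 := by rw [← hm]; exact Module.finrank_pos.ne'
  have hg0 : Nat.gcd d m ≠ 0 := Nat.gcd_ne_zero_left hd0
  have hdg0 : d / Nat.gcd d m ≠ 0 :=
    (Nat.div_pos (Nat.le_of_dvd (Nat.pos_of_ne_zero hd0) (Nat.gcd_dvd_left d m))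
      (Nat.pos_of_ne_zero hg0)).ne'
  have hsep : fE.Separable := (PerfectField.separable_of_irreducible hirr).map
  have hsf : Squarefree fE := hsep.squarefree
  have hnodup : (UniqueFactorizationMonoid.normalizedFactors fE).Nodup :=
    (UniqueFactorizationMonoid.squarefree_iff_nodup_normalizedFactors hfE0).mp hsf
  set s := (UniqueFactorizationMonoid.normalizedFactors fE).toFinset with hs
  have hprop : ∀ p ∈ s, p.Monic ∧ Irreducible p ∧ p.natDegree = d / Nat.gcd d m := by
    intro p hps
    rw [hs, Multiset.mem_toFinset] at hps
    have hpirr : Irreducible p := UniqueFactorizationMonoid.irreducible_of_normalized_factor _ hps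
    have hpmon : p.Monic := by
      have := Polynomial.monic_normalize (p := p) hpirr.ne_zero
      rwa [UniqueFactorizationMonoid.normalize_normalized_factor _ hps] at this
    exact ⟨hpmon, hpirr,
      key F E m d hm f hmonic hirr hdeg p
        (UniqueFactorizationMonoid.dvd_of_mem_normalizedFactors hps) hpmon hpirr⟩
  have hprod : fE = ∏ p ∈ s, p := by
    have h1 : (∏ p ∈ s, p) = (UniqueFactorizationMonoid.normalizedFactors fE).prod := by
      rw [Finset.prod, hs, Multiset.toFinset_val, Multiset.dedup_eq_self.mpr hnodup,
        Multiset.map_id']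
    rw [h1]
    have hassoc := (UniqueFactorizationMonoid.prod_normalizedFactors hfE0).symm
    have hmon : (UniqueFactorizationMonoid.normalizedFactors fE).prod.Monic := by
      rw [← Multiset.map_id (UniqueFactorizationMonoid.normalizedFactors fE)]
      apply Polynomial.monic_multiset_prod_of_monic
      intro p hps
      have hpirr : Irreducible p :=
        UniqueFactorizationMonoid.irreducible_of_normalized_factor _ hps
      have := Polynomial.monic_normalize (p := p) hpirr.ne_zero
      rwa [UniqueFactorizationMonoid.normalize_normalized_factor _ hps] at this
    exact Polynomial.eq_of_monic_of_associated hfEm hmon hassoc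
  refine ⟨s, ?_, hprop, hprod⟩
  have hdeg2 : fE.natDegree = d := by rw [hfE, hmonic.natDegree_map, hdeg]
  have h2 : fE.natDegree = ∑ p ∈ s, p.natDegree := by
    rw [hprod]
    exact Polynomial.natDegree_prod _ _ fun p hp => (hprop p hp).1.ne_zero
  rw [Finset.sum_congr rfl fun p hp => (hprop p hp).2.2, Finset.sum_const, smul_eq_mul,
    hdeg2] at h2
  have h3 : Nat.gcd d m * (d / Nat.gcd d m) = d := Nat.mul_div_cancel' (Nat.gcd_dvd_left d m)
  apply Nat.eq_of_mul_eq_mul_right (Nat.pos_of_ne_zero hdg0)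
  rw [← h2, h3]
end

section
/- Let n be a prime number, let r ≥ 2 be an integer with r·(n−1) even, and let d_1, …, d_r be positive integers. Define ε := 1 if gcd(d_i, n) = 1 for all i, and ε := 0 if n divides d_i for some i (since n is prime, these two cases are exhaustive). Let Φ(X) := 1 + X + ⋯ + X^{n−1} ∈ ℚ[X]. Then in ℚ[X], the polynomial Φ(X)·[n−1]_X divides the polynomial N(X) := (−1)^{n−1} ∏_{i=1}^{r} [n−1]_{X^{d_i}} + ε · n^{r−1} · [n−1]_X · (Φ(X) − 1), where [n−1]_{X^{d}} := ∏_{k=1}^{n−1} (X^{dk} − 1). In particular, the Euler–Poincaré characteristic formula χ = (q−1)(−1)^{n−1} ∏_{i=1}^{r} [n−1]_{q^{d_i}} / [n]_q + ε·n^{r−1}(1 − (q−1)/(q^n−1)) takes integer values at every integer q ≥ 2. -/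
/-!
Write `Φ = 1 + X + ⋯ + X^{n-1}`, the `n`-th cyclotomic polynomial, and `B = [n-1]_X`. Since
`B ∣ [n-1]_{X^d}` for every `d`, `B` divides `N`. At a primitive `n`-th root of unity `ζ`,
`∏_{k=1}^{n-1} (ζ^{ek} - 1) = (-1)^{n-1} n` for `e` prime to `n` (evaluate
`Φ = ∏_k (X - ζ^k)` at `1`), so `B(ζ) ≠ 0` and the irreducible `Φ` is prime to `B`. Hence it is
enough that `N(ζ) = 0`: if `n ∣ d_i` the product vanishes at `ζ` and `ε = 0`; otherwise `Φ(ζ) = 0`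
and the two terms of `N(ζ)` are `±n^r`, with opposite signs because `r(n-1)` is even.
As `Φ·B` is monic over `ℤ`, the quotient `N / (Φ·B)` has integer coefficients, and the
Euler–Poincaré characteristic at `q` is its value at `q`.
-/

open Polynomial Finset

/-- `brP m e = [m]_{X^e} = ∏_{k=1}^{m} (X^{ek} - 1)` in `ℚ[X]`. -/
noncomputable def brP (m : ℕ) (e : ℕ) : Polynomial ℚ :=
  ∏ k ∈ Finset.range m, ((X : ℚ[X]) ^ (e * (k + 1)) - 1)

section Brackets

variable (R : Type*) [CommRing R]

/-- `[m]_{X^e}` over an arbitrary coefficient ring (`brP = qBracket ℚ`), so that the quotient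
can be taken in `ℤ[X]`. -/
noncomputable def qBracket (m e : ℕ) : R[X] :=
  ∏ k ∈ range m, ((X : R[X]) ^ (e * (k + 1)) - 1)

noncomputable def eulerNumerator (n : ℕ) {r : ℕ} (d : Fin r → ℕ) (ε : ℕ) : R[X] :=
  (-1) ^ (n - 1) * ∏ i, qBracket R (n - 1) (d i) +
    (ε : R[X]) * (n : R[X]) ^ (r - 1) * qBracket R (n - 1) 1 *
      ((∑ k ∈ range n, (X : R[X]) ^ k) - 1)

noncomputable def eulerDenominator (n : ℕ) : R[X] :=
  (∑ k ∈ range n, (X : R[X]) ^ k) * qBracket R (n - 1) 1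

variable {R}

theorem map_qBracket {S : Type*} [CommRing S] (f : R →+* S) (m e : ℕ) :
    (qBracket R m e).map f = qBracket S m e := by
  simp [qBracket, Polynomial.map_prod]

theorem map_eulerNumerator {S : Type*} [CommRing S] (f : R →+* S) (n : ℕ) {r : ℕ}
    (d : Fin r → ℕ) (ε : ℕ) : (eulerNumerator R n d ε).map f = eulerNumerator S n d ε := by
  simp [eulerNumerator, Polynomial.map_sum, Polynomial.map_prod, map_qBracket]

theorem map_eulerDenominator {S : Type*} [CommRing S] (f : R →+* S) (n : ℕ) :
    (eulerDenominator R n).map f = eulerDenominator S n := by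
  simp [eulerDenominator, Polynomial.map_sum, map_qBracket]

theorem aeval_qBracket {A : Type*} [CommRing A] [Algebra R A] (x : A) (m e : ℕ) :
    aeval x (qBracket R m e) = ∏ k ∈ range m, (x ^ (e * (k + 1)) - 1) := by
  simp [qBracket]

theorem eval_qBracket (x : R) (m e : ℕ) :
    (qBracket R m e).eval x = ∏ k ∈ range m, (x ^ (e * (k + 1)) - 1) := by
  simp [qBracket, eval_prod]

theorem monic_qBracket (m : ℕ) {e : ℕ} (he : e ≠ 0) : (qBracket R m e).Monic :=
  monic_prod_of_monic _ _ fun _ _ => by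
    simpa using monic_X_pow_sub_C (1 : R) (Nat.mul_ne_zero he (Nat.succ_ne_zero _))

theorem qBracket_one_dvd (m e : ℕ) : qBracket R m 1 ∣ qBracket R m e :=
  prod_dvd_prod_of_dvd _ _ fun _ _ => dvd_pow_sub_one_of_dvd (mul_dvd_mul_right (one_dvd e) _)

theorem qBracket_one_dvd_eulerNumerator (n : ℕ) {r : ℕ} (hr : r ≠ 0) (d : Fin r → ℕ) (ε : ℕ) :
    qBracket R (n - 1) 1 ∣ eulerNumerator R n d ε := by
  have hprod : qBracket R (n - 1) 1 ∣ ∏ i, qBracket R (n - 1) (d i) :=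
    (qBracket_one_dvd _ _).trans (dvd_prod_of_mem _ (mem_univ ⟨0, Nat.pos_of_ne_zero hr⟩))
  exact dvd_add (dvd_mul_of_dvd_right hprod _) (dvd_mul_of_dvd_left (dvd_mul_left _ _) _)

theorem monic_eulerDenominator {n : ℕ} (hn : n ≠ 0) : (eulerDenominator R n).Monic :=
  (monic_geom_sum_X hn).mul (monic_qBracket _ one_ne_zero)

end Brackets

section PrimitiveRoot

variable {A : Type*} [CommRing A] [IsDomain A] {ζ : A} {n : ℕ}

theorem IsPrimitiveRoot.geom_sum_X_eq_prod (hζ : IsPrimitiveRoot ζ n) (hn : 0 < n) :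
    ∑ i ∈ range n, (X : A[X]) ^ i = ∏ k ∈ range (n - 1), (X - C (ζ ^ (k + 1))) := by
  obtain ⟨m, rfl⟩ := Nat.exists_eq_add_of_lt hn
  refine mul_left_cancel₀ (X_sub_C_ne_zero (1 : A)) ?_
  have hroots := X_pow_sub_C_eq_prod hζ hn (one_pow _)
  rw [prod_range_succ'] at hroots
  simpa [geom_sum_mul, mul_comm] using hroots

theorem IsPrimitiveRoot.prod_pow_sub_one (hζ : IsPrimitiveRoot ζ n) (hn : 0 < n) :
    ∏ k ∈ range (n - 1), (ζ ^ (k + 1) - 1) = (-1) ^ (n - 1) * n := by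
  have hone : (n : A) = ∏ k ∈ range (n - 1), (1 - ζ ^ (k + 1)) := by
    simpa [eval_prod, eval_geom_sum] using congrArg (eval 1) (hζ.geom_sum_X_eq_prod hn)
  calc ∏ k ∈ range (n - 1), (ζ ^ (k + 1) - 1)
      = ∏ k ∈ range (n - 1), (-1 * (1 - ζ ^ (k + 1))) := prod_congr rfl fun _ _ => by ring
    _ = (-1) ^ (n - 1) * n := by rw [prod_mul_distrib, prod_const, card_range, hone]

theorem IsPrimitiveRoot.prod_pow_mul_sub_one_of_coprime (hζ : IsPrimitiveRoot ζ n) (hn : 0 < n)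
    {e : ℕ} (he : e.Coprime n) :
    ∏ k ∈ range (n - 1), (ζ ^ (e * (k + 1)) - 1) = (-1) ^ (n - 1) * n := by
  simpa only [pow_mul] using (hζ.pow_of_coprime e he).prod_pow_sub_one hn

end PrimitiveRoot

theorem prod_pow_mul_sub_one_eq_zero {A : Type*} [CommRing A] {x : A} {e m : ℕ} (hx : x ^ e = 1)
    (hm : m ≠ 0) : ∏ k ∈ range m, (x ^ (e * (k + 1)) - 1) = 0 :=
  prod_eq_zero (mem_range.2 (Nat.pos_of_ne_zero hm)) (by simp [hx])

theorem aeval_eulerNumerator_eq_zero {R A : Type*} [CommRing R] [CommRing A] [IsDomain A]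
    [Algebra R A] {n : ℕ} (hn : n.Prime) {ζ : A} (hζ : IsPrimitiveRoot ζ n) {r : ℕ} (hr : r ≠ 0)
    (heven : Even (r * (n - 1))) (d : Fin r → ℕ) (ε : ℕ)
    (hε : ε = if ∀ i, Nat.gcd (d i) n = 1 then 1 else 0) :
    aeval ζ (eulerNumerator R n d ε) = 0 := by
  by_cases hcop : ∀ i, Nat.gcd (d i) n = 1
  · have hbracket : ∀ e, e.Coprime n → aeval ζ (qBracket R (n - 1) e) = (-1) ^ (n - 1) * n :=
      fun e he => by rw [aeval_qBracket, hζ.prod_pow_mul_sub_one_of_coprime hn.pos he]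
    have hΦ : aeval ζ (∑ k ∈ range n, X ^ k : R[X]) = 0 := by
      simpa using hζ.geom_sum_eq_zero hn.one_lt
    have hsign : ((-1 : A) ^ (n - 1)) ^ r = 1 := by
      rw [← pow_mul, mul_comm, heven.neg_one_pow]
    obtain ⟨r, rfl⟩ : ∃ r', r = r' + 1 := ⟨r - 1, by omega⟩
    simp only [eulerNumerator, hε, if_pos hcop, map_add, map_mul, map_pow, map_neg, map_one,
      map_natCast, map_sub, map_prod, hΦ, hbracket _ (hcop _), hbracket 1 (Nat.coprime_one_left n),
      prod_const, card_univ, Fintype.card_fin, Nat.add_sub_cancel]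
    linear_combination (-1 : A) ^ (n - 1) * (n : A) ^ (r + 1) * hsign
  · obtain ⟨j, hj⟩ := not_forall.1 hcop
    have hdvd : n ∣ d j := (Nat.coprime_or_dvd_of_prime hn _).resolve_left fun h => hj h.symm
    have hzero : aeval ζ (qBracket R (n - 1) (d j)) = 0 := by
      rw [aeval_qBracket]
      exact prod_pow_mul_sub_one_eq_zero ((hζ.pow_eq_one_iff_dvd _).2 hdvd)
        (by have := hn.two_le; omega)
    have hprod : ∏ i, aeval ζ (qBracket R (n - 1) (d i)) = 0 := prod_eq_zero (mem_univ j) hzero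
    simp [eulerNumerator, hε, hcop, hprod]

section Rational

variable {n : ℕ}

theorem cyclotomic_dvd_eulerNumerator (hn : n.Prime) {r : ℕ} (hr : r ≠ 0)
    (heven : Even (r * (n - 1))) (d : Fin r → ℕ) (ε : ℕ)
    (hε : ε = if ∀ i, Nat.gcd (d i) n = 1 then 1 else 0) :
    cyclotomic n ℚ ∣ eulerNumerator ℚ n d ε := by
  have hζ := Complex.isPrimitiveRoot_exp n hn.ne_zero
  rw [cyclotomic_eq_minpoly_rat hζ hn.pos]
  exact minpoly.dvd ℚ _ (aeval_eulerNumerator_eq_zero hn hζ hr heven d ε hε)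

theorem isCoprime_cyclotomic_qBracket (hn : 0 < n) :
    IsCoprime (cyclotomic n ℚ) (qBracket ℚ (n - 1) 1) := by
  have hζ := Complex.isPrimitiveRoot_exp n hn.ne'
  refine (cyclotomic.irreducible_rat hn).coprime_iff_not_dvd.2 fun hdvd => ?_
  rw [cyclotomic_eq_minpoly_rat hζ hn, minpoly.dvd_iff, aeval_qBracket] at hdvd
  simp only [one_mul, hζ.prod_pow_sub_one hn] at hdvd
  exact mul_ne_zero (pow_ne_zero _ (neg_ne_zero.2 one_ne_zero)) (Nat.cast_ne_zero.2 hn.ne') hdvd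

theorem eulerDenominator_dvd_eulerNumerator (hn : n.Prime) {r : ℕ} (hr : r ≠ 0)
    (heven : Even (r * (n - 1))) (d : Fin r → ℕ) (ε : ℕ)
    (hε : ε = if ∀ i, Nat.gcd (d i) n = 1 then 1 else 0) :
    eulerDenominator ℚ n ∣ eulerNumerator ℚ n d ε := by
  have := Fact.mk hn
  rw [eulerDenominator, ← cyclotomic_prime ℚ n]
  exact (isCoprime_cyclotomic_qBracket hn.pos).mul_dvd
    (cyclotomic_dvd_eulerNumerator hn hr heven d ε hε) (qBracket_one_dvd_eulerNumerator n hr d ε)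

end Rational

theorem Polynomial.exists_intCast_eq_eval_map_div {D N : ℤ[X]} (hD : D.Monic)
    (hdvd : D.map (Int.castRingHom ℚ) ∣ N.map (Int.castRingHom ℚ)) (q : ℤ)
    (hq : (D.map (Int.castRingHom ℚ)).eval (q : ℚ) ≠ 0) :
    ∃ c : ℤ, (c : ℚ) =
      (N.map (Int.castRingHom ℚ)).eval (q : ℚ) / (D.map (Int.castRingHom ℚ)).eval (q : ℚ) := by
  obtain ⟨C, rfl⟩ := (map_dvd_map _ Int.cast_injective hD).1 hdvd
  refine ⟨C.eval q, ?_⟩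
  rw [Polynomial.map_mul, eval_mul, mul_div_cancel_left₀ _ hq, eval_intCast_map]
  rfl

section Evaluation

variable {K : Type*} [Field K] {n : ℕ} {q : K}

theorem eval_eulerDenominator_ne_zero (hn : 0 < n) (hq : ∀ k ∈ Icc 1 n, q ^ k ≠ 1) :
    (eulerDenominator K n).eval q ≠ 0 := by
  have hS : ∑ k ∈ range n, q ^ k ≠ 0 := right_ne_zero_of_mul
    ((mul_geom_sum q n).trans_ne (sub_ne_zero.2 (hq n (by simp; omega))))
  have hB : ∏ k ∈ range (n - 1), (q ^ (1 * (k + 1)) - 1) ≠ 0 :=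
    prod_ne_zero_iff.2 fun k hk => sub_ne_zero.2 (hq _ (by simp at hk ⊢; omega))
  simpa [eulerDenominator, eval_qBracket, eval_finsetSum] using mul_ne_zero hS hB

theorem eulerChar_eq_eval_div (hn : 0 < n) (hq : ∀ k ∈ Icc 1 n, q ^ k ≠ 1) {r : ℕ}
    (d : Fin r → ℕ) (ε : ℕ) :
    (q - 1) * (-1) ^ (n - 1) * (∏ i, ∏ k ∈ range (n - 1), (q ^ (d i * (k + 1)) - 1)) /
        (∏ k ∈ range n, (q ^ (k + 1) - 1)) +
      (ε : K) * (n : K) ^ (r - 1) * (1 - (q - 1) / (q ^ n - 1)) =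
    (eulerNumerator K n d ε).eval q / (eulerDenominator K n).eval q := by
  have hq1 : q - 1 ≠ 0 := sub_ne_zero.2 (by simpa using hq 1 (by simp; omega))
  have hD := eval_eulerDenominator_ne_zero hn hq
  obtain ⟨m, rfl⟩ : ∃ m, n = m + 1 := ⟨n - 1, by omega⟩
  simp only [eulerDenominator, eval_mul, eval_qBracket, eval_finsetSum, eval_pow, eval_X,
    one_mul, Nat.add_sub_cancel, mul_ne_zero_iff] at hD
  rw [prod_range_succ, ← mul_geom_sum]
  simp only [eulerNumerator, eulerDenominator, eval_add, eval_mul, eval_pow, eval_neg, eval_one,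
    eval_sub, eval_natCast, eval_prod, eval_qBracket, eval_finsetSum, eval_X, one_mul,
    Nat.add_sub_cancel]
  field_simp [hD.1, hD.2]

end Evaluation

theorem stmt_11_general (n : ℕ) (hn : n.Prime) (r : ℕ) (hr : 2 ≤ r)
    (heven : Even (r * (n - 1)))
    (d : Fin r → ℕ)
    (ε : ℕ) (hε : ε = if ∀ i, Nat.gcd (d i) n = 1 then 1 else 0) :
    ((∑ k ∈ Finset.range n, (X : ℚ[X]) ^ k) * brP (n - 1) 1 ∣
        (-1) ^ (n - 1) * ∏ i, brP (n - 1) (d i) +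
          (ε : ℚ[X]) * (n : ℚ[X]) ^ (r - 1) * brP (n - 1) 1 *
            ((∑ k ∈ Finset.range n, (X : ℚ[X]) ^ k) - 1)) ∧
      ∀ q : ℤ, 2 ≤ q → ∃ c : ℤ, (c : ℚ) =
        ((q : ℚ) - 1) * (-1) ^ (n - 1) *
            (∏ i, ∏ k ∈ Finset.range (n - 1), ((q : ℚ) ^ (d i * (k + 1)) - 1)) /
            (∏ k ∈ Finset.range n, ((q : ℚ) ^ (k + 1) - 1)) +
          (ε : ℚ) * (n : ℚ) ^ (r - 1) * (1 - ((q : ℚ) - 1) / ((q : ℚ) ^ n - 1)) := by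
  have hdvd : eulerDenominator ℚ n ∣ eulerNumerator ℚ n d ε :=
    eulerDenominator_dvd_eulerNumerator hn (by omega) heven d ε hε
  refine ⟨hdvd, fun q hq => ?_⟩
  have hq' : ∀ k ∈ Icc 1 n, (q : ℚ) ^ k ≠ 1 := fun k hk =>
    (one_lt_pow₀ (by exact_mod_cast hq) (by simp at hk; omega)).ne'
  rw [eulerChar_eq_eval_div hn.pos hq', ← map_eulerNumerator (Int.castRingHom ℚ),
    ← map_eulerDenominator (Int.castRingHom ℚ)]
  refine exists_intCast_eq_eval_map_div (monic_eulerDenominator hn.ne_zero) ?_ q ?_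
  · rwa [map_eulerNumerator, map_eulerDenominator]
  · rw [map_eulerDenominator]
    exact eval_eulerDenominator_ne_zero hn.pos hq'

/-- Integrality of the Euler–Poincaré characteristic formula: for prime `n`,
`Φ(X)·[n-1]_X` divides
`(-1)^{n-1} ∏_i [n-1]_{X^{d_i}} + ε n^{r-1} [n-1]_X (Φ(X) - 1)`,
and consequently the Euler–Poincaré characteristic formula takes integer
values at every integer `q ≥ 2`. -/
theorem stmt_11 (n : ℕ) (hn : n.Prime) (r : ℕ) (hr : 2 ≤ r)
    (heven : Even (r * (n - 1)))
    (d : Fin r → ℕ) (hd : ∀ i, 0 < d i)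
    (ε : ℕ) (hε : ε = if ∀ i, Nat.gcd (d i) n = 1 then 1 else 0) :
    ((∑ k ∈ Finset.range n, (X : ℚ[X]) ^ k) * brP (n - 1) 1 ∣
        (-1) ^ (n - 1) * ∏ i, brP (n - 1) (d i) +
          (ε : ℚ[X]) * (n : ℚ[X]) ^ (r - 1) * brP (n - 1) 1 *
            ((∑ k ∈ Finset.range n, (X : ℚ[X]) ^ k) - 1)) ∧
      ∀ q : ℤ, 2 ≤ q → ∃ c : ℤ, (c : ℚ) =
        ((q : ℚ) - 1) * (-1) ^ (n - 1) *
            (∏ i, ∏ k ∈ Finset.range (n - 1), ((q : ℚ) ^ (d i * (k + 1)) - 1)) /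
            (∏ k ∈ Finset.range n, ((q : ℚ) ^ (k + 1) - 1)) +
          (ε : ℚ) * (n : ℚ) ^ (r - 1) * (1 - ((q : ℚ) - 1) / ((q : ℚ) ^ n - 1)) :=
  stmt_11_general n hn r hr heven d ε hε
end

section
/- Let n be a prime number, let q ≥ 2 be an integer, let r ≥ 2 be an integer with r·(n−1) even, and let d_1, …, d_r be positive integers. Define ε := 1 if gcd(d_i, n) = 1 for all i, and ε := 0 if n divides d_i for some i. If c is an integer satisfying c · (q^n − 1) · [n−1]_q = (q−1)·(−1)^{n−1} ∏_{i=1}^{r} [n−1]_{q^{d_i}} + ε · n^{r−1} · [n−1]_q · (q^n − q), then c ≡ 1 (mod q). -/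
/-- `brZ q m = [m]_q = (q^m - 1)(q^{m-1} - 1) ⋯ (q - 1) ∈ ℤ`, with `[0]_q = 1`. -/
def brZ (q : ℤ) (m : ℕ) : ℤ := ∏ k ∈ Finset.range m, (q ^ (k + 1) - 1)

/-- Corollary 3.14 of the paper: the Euler–Poincaré characteristic `c` defined
by the formula of Theorem 3.13 is congruent to `1` modulo `q`. -/
theorem stmt_12 (n : ℕ) (hn : n.Prime) (q : ℤ) (hq : 2 ≤ q)
    (r : ℕ) (hr : 2 ≤ r) (heven : Even (r * (n - 1)))
    (d : Fin r → ℕ) (hd : ∀ i, 0 < d i)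
    (ε : ℤ) (hε : ε = if ∀ i, Nat.gcd (d i) n = 1 then 1 else 0)
    (c : ℤ)
    (hc : c * (q ^ n - 1) * brZ q (n - 1) =
      (q - 1) * (-1) ^ (n - 1) * ∏ i, brZ (q ^ (d i)) (n - 1) +
        ε * (n : ℤ) ^ (r - 1) * brZ q (n - 1) * (q ^ n - q)) :
    c ≡ 1 [ZMOD q] := by
  set m := q.toNat with hm
  have hqm : (q : ℤ) = (m : ℤ) := by
    rw [hm, Int.toNat_of_nonneg (by omega)]
  rw [hqm, ← ZMod.intCast_eq_intCast_iff]
  have hq0 : ((q : ℤ) : ZMod m) = 0 := by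
    rw [hqm]; exact_mod_cast ZMod.natCast_self m
  -- cast hc to ZMod m
  have hC := congrArg (fun x : ℤ => (x : ZMod m)) hc
  simp only [brZ, Int.cast_mul, Int.cast_add, Int.cast_sub, Int.cast_prod,
    Int.cast_pow, Int.cast_one, Int.cast_neg, hq0] at hC
  have hn1 : 1 ≤ n := hn.one_lt.le.trans' (by norm_num)
  have hzero : ∀ k : ℕ, 1 ≤ k → (0 : ZMod m) ^ k = 0 := fun k hk =>
    zero_pow (by omega)
  rw [hzero n (by omega)] at hC
  have hbr : (∏ k ∈ Finset.range (n-1), ((0:ZMod m) ^ (k+1) - 1)) = (-1) ^ (n-1) := by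
    calc (∏ k ∈ Finset.range (n-1), ((0:ZMod m) ^ (k+1) - 1))
        = ∏ _k ∈ Finset.range (n-1), (-1 : ZMod m) :=
          Finset.prod_congr rfl (fun k _ => by rw [hzero (k+1) (by omega)]; ring)
      _ = (-1) ^ (n-1) := by simp
  have hbrd : ∀ i : Fin r,
      (∏ k ∈ Finset.range (n-1), (((0:ZMod m) ^ d i) ^ (k+1) - 1)) = (-1) ^ (n-1) := by
    intro i
    rw [hzero (d i) (hd i)]
    exact hbr
  rw [hbr, Finset.prod_congr rfl (fun i _ => hbrd i), Finset.prod_const,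
    Finset.card_univ, Fintype.card_fin, ← pow_mul, ← mul_comm r (n-1),
    (heven).neg_one_pow] at hC
  -- hC : c * (0 - 1) * (-1)^(n-1) = (0 - 1) * (-1)^(n-1) * 1 + ε * n^(r-1) * (-1)^(n-1) * (0 - 0)
  have key : (c : ZMod m) * (-1)^n = (-1)^n := by
    have : (-1:ZMod m)^n = (0-1) * (-1)^(n-1) := by
      rw [show (0:ZMod m) - 1 = -1 by ring, ← pow_succ']
      congr 1
      omega
    rw [this, ← mul_assoc, hC]
    ring
  have := congrArg (fun x => x * (-1:ZMod m)^n) key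
  simpa [mul_assoc, ← pow_add, ← two_mul, pow_mul] using this
end
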